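/- Let Δ = Δ_0 + Δ_1 + ⋯ + Δ_k be a Minkowski sum decomposition of a reflexive polytope Δ ⊂ ℝ^d into lattice polytopes and σ̄∨ ⊂ ℝ^d ⊕ ℝ^{k+1} the dual of the Cayley cone. Under the linear isomorphism ℝ^d ⊕ ℝ^{k+1} → ℝ^d ⊕ ℝ^k ⊕ ℝ sending (n, α_0, …, α_k) to (n, α_1, …, α_k, α_0 + ⋯ + α_k), the image of σ̄∨ equals {(t·Conv({u − Σ_{i=1}^k min⟨Δ_i, u⟩ e_i* : u ∈ Δ*} ∪ {e_1*, …, e_k*}), t) : t ≥ 0}, where {e_1*,…,e_k*} is the standard basis of the middle factor ℝ^k. -/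

import Mathlib

/-!
Write `hᵢ(u) = min⟨Δᵢ, u⟩`. Testing against the rays `(x, eᵢ)`, `x ∈ Δᵢ`, shows that the dual of the
Cayley cone is `{(u, α) | hᵢ(u) + αᵢ ≥ 0 ∀ i}`, so its image is cut out by `βᵢ + hᵢ₊₁(v) ≥ 0` and
`∑ βᵢ ≤ t + h₀(v)`. The `hᵢ` are concave and positively homogeneous, and `∑ hᵢ = min⟨Δ, ·⟩` is
`≤ 0`, with equality only at `0` since `0` is interior to `Δ`. Hence the image is the cone over its
slice at `t = 1` (and meets `t = 0` only at the origin), and that slice is convex and contains the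
generators. Conversely a point `(v, β)` of the slice, with slacks `γᵢ = βᵢ + hᵢ₊₁(v) ≥ 0` and
`s = 1 - ∑ γᵢ ≥ 0`, is the convex combination `s • (w, -h(w)) + ∑ γᵢ • eᵢ*` with `v = s • w`,
`w ∈ Δ*`.
-/

open scoped Pointwise
open Set

noncomputable section

/-- The standard pairing on `ℝ^n`. -/
def pairing {n : ℕ} (x y : Fin n → ℝ) : ℝ := ∑ i, x i * y i

/-- A point of `ℝ^n` lying in the lattice `ℤ^n`. -/
def IsLatticePt {n : ℕ} (x : Fin n → ℝ) : Prop := ∀ i, ∃ z : ℤ, x i = (z : ℝ)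

/-- A lattice polytope: the convex hull of finitely many lattice points. -/
def IsLatticePolytope {n : ℕ} (P : Set (Fin n → ℝ)) : Prop :=
  ∃ S : Set (Fin n → ℝ), S.Finite ∧ (∀ x ∈ S, IsLatticePt x) ∧ P = convexHull ℝ S

/-- The dual polytope `P* = {y | ⟨x,y⟩ ≥ -1 ∀ x ∈ P}`. -/
def polarDual {n : ℕ} (P : Set (Fin n → ℝ)) : Set (Fin n → ℝ) :=
  {y | ∀ x ∈ P, -1 ≤ pairing x y}

/-- A reflexive polytope. -/
def IsReflexive {n : ℕ} (P : Set (Fin n → ℝ)) : Prop :=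
  IsLatticePolytope P ∧ (0 : Fin n → ℝ) ∈ interior P ∧ IsLatticePolytope (polarDual P)

/-- `min⟨P, u⟩ = min_{x ∈ P} ⟨x, u⟩`. -/
def minPair {n : ℕ} (P : Set (Fin n → ℝ)) (u : Fin n → ℝ) : ℝ :=
  sInf ((fun x => pairing x u) '' P)

/-- The real vector space `ℝ^d ⊕ ℝ^k`. -/
abbrev Vdk (d k : ℕ) := (Fin d → ℝ) × (Fin k → ℝ)

/-- The pairing on `ℝ^d ⊕ ℝ^k` (sum of the two standard pairings). -/
def pairingV {d k : ℕ} (x y : Vdk d k) : ℝ := pairing x.1 y.1 + pairing x.2 y.2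

def IsLatticePtV {d k : ℕ} (x : Vdk d k) : Prop := IsLatticePt x.1 ∧ IsLatticePt x.2

def IsLatticePolytopeV {d k : ℕ} (P : Set (Vdk d k)) : Prop :=
  ∃ S : Set (Vdk d k), S.Finite ∧ (∀ x ∈ S, IsLatticePtV x) ∧ P = convexHull ℝ S

def polarDualV {d k : ℕ} (P : Set (Vdk d k)) : Set (Vdk d k) :=
  {y | ∀ x ∈ P, -1 ≤ pairingV x y}

def IsReflexiveV {d k : ℕ} (P : Set (Vdk d k)) : Prop :=
  IsLatticePolytopeV P ∧ (0 : Vdk d k) ∈ interior P ∧ IsLatticePolytopeV (polarDualV P)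

/-- The Cayley cone `σ̄ = {(t₀Δ₀ + ⋯ + t_kΔ_k, t₀, …, t_k) : tᵢ ≥ 0} ⊆ ℝ^d ⊕ ℝ^{k+1}`. -/
def cayleyCone {d k : ℕ} (Δ : Fin (k+1) → Set (Fin d → ℝ)) : Set (Vdk d (k+1)) :=
  {p | (∀ i, 0 ≤ p.2 i) ∧ p.1 ∈ ∑ i, p.2 i • Δ i}

/-- The dual cone of a cone in `ℝ^d ⊕ ℝ^k`. -/
def dualConeV {d k : ℕ} (σ : Set (Vdk d k)) : Set (Vdk d k) :=
  {y | ∀ x ∈ σ, 0 ≤ pairingV x y}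

/-- The linear isomorphism `ℝ^d ⊕ ℝ^{k+1} → ℝ^d ⊕ ℝ^k ⊕ ℝ`,
`(n, α₀, …, α_k) ↦ (n, α₁, …, α_k, α₀ + ⋯ + α_k)`. -/
def cayleyIso {d k : ℕ} : Vdk d (k+1) → (Fin d → ℝ) × (Fin k → ℝ) × ℝ :=
  fun p => (p.1, fun i => p.2 i.succ, ∑ i, p.2 i)

open Filter Topology

lemma isCompact_sum {ι E : Type*} [Fintype ι] [AddCommMonoid E] [TopologicalSpace E]
    [ContinuousAdd E] {Δ : ι → Set E} (hc : ∀ i, IsCompact (Δ i)) : IsCompact (∑ i, Δ i) := by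
  have hsum : ∑ i, Δ i = (fun g : ι → E => ∑ i, g i) '' univ.pi Δ := by
    ext x
    simp [Set.mem_fintype_sum]
  rw [hsum]
  exact (isCompact_univ_pi hc).image (continuous_finsetSum _ fun i _ => continuous_apply i)

section MinPair

variable {n : ℕ} {P : Set (Fin n → ℝ)} {x u : Fin n → ℝ}

lemma pairing_eq_dotProduct (x y : Fin n → ℝ) : pairing x y = x ⬝ᵥ y := rfl

lemma IsLatticePolytope.isCompact (hP : IsLatticePolytope P) : IsCompact P := by
  obtain ⟨S, hS, -, rfl⟩ := hP
  exact hS.isCompact_convexHull ℝ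

lemma continuous_pairing_left (u : Fin n → ℝ) : Continuous fun x => pairing x u :=
  continuous_id.dotProduct continuous_const

lemma minPair_le (hP : IsCompact P) (hx : x ∈ P) (u : Fin n → ℝ) :
    minPair P u ≤ pairing x u :=
  csInf_le (hP.image (continuous_pairing_left u)).bddBelow (mem_image_of_mem _ hx)

lemma le_minPair (hne : P.Nonempty) {c : ℝ} (h : ∀ x ∈ P, c ≤ pairing x u) :
    c ≤ minPair P u :=
  le_csInf (hne.image _) (forall_mem_image.2 h)

lemma exists_pairing_eq_minPair (hP : IsCompact P) (hne : P.Nonempty) (u : Fin n → ℝ) :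
    ∃ x ∈ P, pairing x u = minPair P u :=
  (hP.image (continuous_pairing_left u)).sInf_mem (hne.image _)

lemma minPair_smul {t : ℝ} (ht : 0 ≤ t) (P : Set (Fin n → ℝ)) (u : Fin n → ℝ) :
    minPair P (t • u) = t * minPair P u := by
  have himage : (fun x => pairing x (t • u)) '' P = t • (fun x => pairing x u) '' P := by
    rw [← Set.image_smul, Set.image_image]
    simp only [pairing_eq_dotProduct, dotProduct_smul, smul_eq_mul]
  rw [minPair, himage, Real.sInf_smul_of_nonneg ht, smul_eq_mul, minPair]

lemma minPair_zero (P : Set (Fin n → ℝ)) : minPair P 0 = 0 := by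
  simpa using minPair_smul le_rfl P (0 : Fin n → ℝ)

lemma minPair_add_minPair_le (hP : IsCompact P) (hne : P.Nonempty) (u v : Fin n → ℝ) :
    minPair P u + minPair P v ≤ minPair P (u + v) :=
  le_minPair hne fun x hx => by
    rw [pairing_eq_dotProduct, dotProduct_add]
    exact add_le_add (minPair_le hP hx u) (minPair_le hP hx v)

lemma concaveOn_minPair (hP : IsCompact P) (hne : P.Nonempty) : ConcaveOn ℝ univ (minPair P) :=
  ⟨convex_univ, fun u _ v _ a b ha hb _ => by
    rw [smul_eq_mul, smul_eq_mul, ← minPair_smul ha, ← minPair_smul hb]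
    exact minPair_add_minPair_le hP hne _ _⟩

lemma minPair_nonpos (hP : IsCompact P) (h0 : (0 : Fin n → ℝ) ∈ P) (u : Fin n → ℝ) :
    minPair P u ≤ 0 :=
  (minPair_le hP h0 u).trans_eq (zero_dotProduct u)

lemma minPair_neg (hP : IsCompact P) (h0 : (0 : Fin n → ℝ) ∈ interior P) (hu : u ≠ 0) :
    minPair P u < 0 := by
  have hsmall : ∀ᶠ c in 𝓝[>] (0 : ℝ), -(c • u) ∈ P := by
    have hlim : Tendsto (fun c : ℝ => -(c • u)) (𝓝 0) (𝓝 0) := by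
      have hcont : Continuous fun c : ℝ => -(c • u) := by fun_prop
      simpa using hcont.tendsto 0
    exact (hlim.eventually (mem_interior_iff_mem_nhds.1 h0)).filter_mono nhdsWithin_le_nhds
  obtain ⟨c, hcP, hc⟩ := (hsmall.and self_mem_nhdsWithin).exists
  have huu : 0 < u ⬝ᵥ u := by simpa using Matrix.dotProduct_self_star_pos_iff.2 hu
  calc minPair P u ≤ pairing (-(c • u)) u := minPair_le hP hcP u
    _ = -(c * (u ⬝ᵥ u)) := by simp [pairing_eq_dotProduct]
    _ < 0 := neg_neg_of_pos (mul_pos hc huu)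

lemma minPair_sum {ι : Type*} [Fintype ι] {Δ : ι → Set (Fin n → ℝ)} (hc : ∀ i, IsCompact (Δ i))
    (hne : ∀ i, (Δ i).Nonempty) (u : Fin n → ℝ) :
    minPair (∑ i, Δ i) u = ∑ i, minPair (Δ i) u := by
  choose x hxΔ hx using fun i => exists_pairing_eq_minPair (hc i) (hne i) u
  have hxmem : ∑ i, x i ∈ ∑ i, Δ i := (Set.mem_fintype_sum _ _).2 ⟨x, hxΔ, rfl⟩
  refine le_antisymm ?_ (le_minPair ⟨_, hxmem⟩ fun y hy => ?_)
  · calc minPair (∑ i, Δ i) u ≤ pairing (∑ i, x i) u := minPair_le (isCompact_sum hc) hxmem u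
      _ = ∑ i, minPair (Δ i) u := by
        simp only [pairing_eq_dotProduct, sum_dotProduct] at hx ⊢
        exact Finset.sum_congr rfl fun i _ => hx i
  · obtain ⟨g, hg, rfl⟩ := (Set.mem_fintype_sum _ _).1 hy
    rw [pairing_eq_dotProduct, sum_dotProduct]
    exact Finset.sum_le_sum fun i _ => minPair_le (hc i) (hg i) u

end MinPair

lemma nonempty_sum_iff {ι M : Type*} [Fintype ι] [AddCommMonoid M] {s : ι → Set M} :
    (∑ i, s i).Nonempty ↔ ∀ i, (s i).Nonempty := by
  simp only [Set.Nonempty, Set.mem_fintype_sum]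
  constructor
  · rintro ⟨_, g, hg, -⟩ i
    exact ⟨g i, hg i⟩
  · intro h
    choose g hg using h
    exact ⟨_, g, hg, rfl⟩

lemma smul_add_sum_smul_mem_convexHull {𝕜 E ι : Type*} [Field 𝕜] [LinearOrder 𝕜]
    [IsStrictOrderedRing 𝕜] [AddCommGroup E] [Module 𝕜 E] [Fintype ι] {s : Set E} {x : E}
    {y : ι → E} (hx : x ∈ s) (hy : ∀ i, y i ∈ s) {a : 𝕜} {b : ι → 𝕜} (ha : 0 ≤ a)
    (hb : ∀ i, 0 ≤ b i) (hab : a + ∑ i, b i = 1) :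
    a • x + ∑ i, b i • y i ∈ convexHull 𝕜 s := by
  simpa [Fintype.sum_option] using (convex_convexHull 𝕜 s).sum_mem (t := Finset.univ)
    (w := fun o : Option ι => o.elim a b) (z := fun o : Option ι => o.elim x y)
    (by rintro (_ | i) _ <;> simp [ha, hb])
    (by simpa [Fintype.sum_option] using hab)
    (by rintro (_ | i) _ <;> simp [subset_convexHull 𝕜 s hx, subset_convexHull 𝕜 s (hy _)])

lemma sum_smul_mk_zero_single {R M ι : Type*} [Semiring R] [AddCommMonoid M] [Module R M]
    [Fintype ι] [DecidableEq ι] (γ : ι → R) :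
    ∑ i, γ i • ((0 : M), (Pi.single i 1 : ι → R)) = (0, γ) := by
  ext j
  · simp [Prod.fst_sum]
  · simp [Prod.snd_sum, Finset.sum_apply, Pi.single_apply]

section Cayley

variable {d k : ℕ} {Δ : Fin (k+1) → Set (Fin d → ℝ)}

lemma mk_single_mem_cayleyCone (hne : ∀ i, (Δ i).Nonempty) {i : Fin (k+1)} {x : Fin d → ℝ}
    (hx : x ∈ Δ i) : ((x, Pi.single i 1) : Vdk d (k+1)) ∈ cayleyCone Δ := by
  refine ⟨fun j => ?_, ?_⟩
  · by_cases h : j = i <;> simp [h]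
  · show x ∈ ∑ j, (Pi.single i (1 : ℝ) : Fin (k+1) → ℝ) j • Δ j
    rwa [Finset.sum_eq_single i (fun j _ hj => by rw [Pi.single_eq_of_ne hj, zero_smul_set (hne j)])
      (by simp), Pi.single_eq_same, one_smul]

lemma mem_dualConeV_cayleyCone_iff (hc : ∀ i, IsCompact (Δ i)) (hne : ∀ i, (Δ i).Nonempty)
    (y : Vdk d (k+1)) : y ∈ dualConeV (cayleyCone Δ) ↔ ∀ i, 0 ≤ minPair (Δ i) y.1 + y.2 i := by
  constructor
  · intro h i
    have hlow : ∀ x ∈ Δ i, -y.2 i ≤ pairing x y.1 := fun x hx => by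
      have := h _ (mk_single_mem_cayleyCone hne hx)
      simp only [pairingV, pairing_eq_dotProduct, single_dotProduct, one_mul] at this
      rw [pairing_eq_dotProduct]
      linarith
    linarith [le_minPair (hne i) hlow]
  · rintro h ⟨p, τ⟩ ⟨hτ, hp⟩
    obtain ⟨g, hg, rfl⟩ := (Set.mem_fintype_sum _ _).1 hp
    choose z hz hgz using hg
    have hterm : ∀ j, 0 ≤ pairing (g j) y.1 + τ j * y.2 j := fun j => by
      rw [← hgz, pairing_eq_dotProduct, smul_dotProduct, smul_eq_mul, ← mul_add]
      have hmin := minPair_le (hc j) (hz j) y.1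
      rw [pairing_eq_dotProduct] at hmin
      exact mul_nonneg (hτ j) (by linarith [h j])
    show 0 ≤ pairing (∑ j, g j) y.1 + pairing τ y.2
    rw [pairing_eq_dotProduct, sum_dotProduct, pairing, ← Finset.sum_add_distrib]
    exact Finset.sum_nonneg fun j _ => hterm j

/-- `(v, β) ∈ cayleySlice Δ t` says that `α = (t - ∑ βᵢ, β)` satisfies
`min⟨Δᵢ, v⟩ + αᵢ ≥ 0` for every `i`. -/
def cayleySlice (Δ : Fin (k+1) → Set (Fin d → ℝ)) (t : ℝ) : Set (Vdk d k) :=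
  {p | (∀ i, 0 ≤ p.2 i + minPair (Δ i.succ) p.1) ∧ ∑ i, p.2 i ≤ t + minPair (Δ 0) p.1}

lemma image_cayleyIso_dualConeV_cayleyCone (hc : ∀ i, IsCompact (Δ i))
    (hne : ∀ i, (Δ i).Nonempty) :
    cayleyIso '' dualConeV (cayleyCone Δ) = {q | (q.1, q.2.1) ∈ cayleySlice Δ q.2.2} := by
  ext ⟨v, β, t⟩
  simp only [mem_image, mem_ofPred_eq, mem_dualConeV_cayleyCone_iff hc hne]
  constructor
  · rintro ⟨⟨u, α⟩, hα, hq⟩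
    simp only [cayleyIso, Prod.mk.injEq] at hq
    obtain ⟨rfl, rfl, rfl⟩ := hq
    refine ⟨fun i => by linarith [hα i.succ], ?_⟩
    rw [Fin.sum_univ_succ]
    linarith [hα 0]
  · rintro ⟨hβ, hsum⟩
    refine ⟨(v, Fin.cons (t - ∑ i, β i) β), fun i => ?_, by simp [cayleyIso, Fin.sum_univ_succ]⟩
    refine Fin.cases ?_ (fun i => ?_) i
    · simp only [Fin.cons_zero]
      linarith
    · simpa [add_comm] using hβ i

lemma zero_mem_cayleySlice {t : ℝ} (ht : 0 ≤ t) : (0 : Vdk d k) ∈ cayleySlice Δ t :=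
  ⟨fun i => by simp [minPair_zero], by simp [minPair_zero, ht]⟩

lemma smul_mem_cayleySlice {c t : ℝ} (hc : 0 ≤ c) {p : Vdk d k} (hp : p ∈ cayleySlice Δ t) :
    c • p ∈ cayleySlice Δ (c * t) := by
  refine ⟨fun i => ?_, ?_⟩
  · simp only [Prod.smul_fst, Prod.smul_snd, Pi.smul_apply, smul_eq_mul, minPair_smul hc,
      ← mul_add]
    exact mul_nonneg hc (hp.1 i)
  · simp only [Prod.smul_fst, Prod.smul_snd, Pi.smul_apply, smul_eq_mul, minPair_smul hc,
      ← Finset.mul_sum, ← mul_add]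
    exact mul_le_mul_of_nonneg_left hp.2 hc

lemma neg_le_minPair_sum_of_mem_cayleySlice (hc : ∀ i, IsCompact (Δ i))
    (hne : ∀ i, (Δ i).Nonempty) {t : ℝ} {p : Vdk d k} (hp : p ∈ cayleySlice Δ t) :
    -t ≤ minPair (∑ i, Δ i) p.1 := by
  have hβ : 0 ≤ ∑ i, (p.2 i + minPair (Δ i.succ) p.1) := Finset.sum_nonneg fun i _ => hp.1 i
  rw [Finset.sum_add_distrib] at hβ
  rw [minPair_sum hc hne, Fin.sum_univ_succ]
  linarith [hp.2]

def cayleyVertex (Δ : Fin (k+1) → Set (Fin d → ℝ)) (u : Fin d → ℝ) : Vdk d k :=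
  (u, fun i => -minPair (Δ i.succ) u)

lemma cayleyVertex_smul {t : ℝ} (ht : 0 ≤ t) (u : Fin d → ℝ) :
    cayleyVertex Δ (t • u) = t • cayleyVertex Δ u := by
  ext i <;> simp [cayleyVertex, minPair_smul ht]

lemma convex_cayleySlice (hc : ∀ i, IsCompact (Δ i)) (hne : ∀ i, (Δ i).Nonempty) (t : ℝ) :
    Convex ℝ (cayleySlice Δ t) := by
  have hconc : ∀ j, ConcaveOn ℝ univ fun p : Vdk d k => minPair (Δ j) p.1 := fun j =>
    (concaveOn_minPair (hc j) (hne j)).comp_linearMap (LinearMap.fst ℝ _ _)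
  have hβ : ∀ i : Fin k, Convex ℝ {p : Vdk d k | 0 ≤ p.2 i + minPair (Δ i.succ) p.1} :=
      fun i => by
    simpa using ((LinearMap.proj i ∘ₗ LinearMap.snd ℝ _ _).concaveOn convex_univ).add
      (hconc i.succ) |>.convex_ge 0
  have hsum : Convex ℝ {p : Vdk d k | ∑ i, p.2 i - minPair (Δ 0) p.1 ≤ t} := by
    simpa using ((∑ i : Fin k, LinearMap.proj i ∘ₗ LinearMap.snd ℝ (Fin d → ℝ) (Fin k → ℝ))
      |>.convexOn convex_univ).sub (hconc 0) |>.convex_le t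
  convert (convex_iInter hβ).inter hsum using 1
  ext p
  simp [cayleySlice]

lemma cayleyVertex_mem_cayleySlice_one (hc : ∀ i, IsCompact (Δ i)) (hne : ∀ i, (Δ i).Nonempty)
    {u : Fin d → ℝ} (hu : u ∈ polarDual (∑ i, Δ i)) :
    cayleyVertex Δ u ∈ cayleySlice Δ 1 := by
  have hmin : -1 ≤ minPair (∑ i, Δ i) u := le_minPair (nonempty_sum_iff.2 hne) hu
  rw [minPair_sum hc hne, Fin.sum_univ_succ] at hmin
  refine ⟨fun i => by simp [cayleyVertex], ?_⟩
  simp only [cayleyVertex, Finset.sum_neg_distrib]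
  linarith

lemma mk_zero_single_mem_cayleySlice_one (i : Fin k) :
    (((0 : Fin d → ℝ), Pi.single i 1) : Vdk d k) ∈ cayleySlice Δ 1 := by
  refine ⟨fun j => ?_, ?_⟩
  · by_cases h : j = i <;> simp [h, minPair_zero]
  · simp [minPair_zero]

lemma fst_mem_polarDual_of_mem_cayleySlice_one (hc : ∀ i, IsCompact (Δ i))
    (hne : ∀ i, (Δ i).Nonempty) {p : Vdk d k} (hp : p ∈ cayleySlice Δ 1) :
    p.1 ∈ polarDual (∑ i, Δ i) := fun _ hx =>
  (neg_le_minPair_sum_of_mem_cayleySlice hc hne hp).trans (minPair_le (isCompact_sum hc) hx p.1)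

variable (hc : ∀ i, IsCompact (Δ i)) (hne : ∀ i, (Δ i).Nonempty)
  (h0 : (0 : Fin d → ℝ) ∈ interior (∑ i, Δ i))
include hc hne h0

lemma eq_zero_of_mem_cayleySlice_zero {p : Vdk d k} (hp : p ∈ cayleySlice Δ 0) : p = 0 := by
  obtain ⟨v, β⟩ := p
  obtain rfl : v = 0 := by
    by_contra hv
    linarith [neg_le_minPair_sum_of_mem_cayleySlice hc hne hp,
      minPair_neg (isCompact_sum hc) h0 hv]
  have hβ : ∀ i, 0 ≤ β i := by simpa [minPair_zero] using hp.1
  have hsum : ∑ i, β i = 0 :=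
    le_antisymm (by simpa [minPair_zero] using hp.2) (Finset.sum_nonneg fun i _ => hβ i)
  have hβ0 : β = 0 := funext fun i =>
    (Finset.sum_eq_zero_iff_of_nonneg fun i _ => hβ i).1 hsum i (Finset.mem_univ i)
  simp [hβ0]

lemma mem_cayleySlice_iff {p : Vdk d k} {t : ℝ} :
    p ∈ cayleySlice Δ t ↔ 0 ≤ t ∧ p ∈ t • cayleySlice Δ 1 := by
  rcases lt_trichotomy t 0 with ht | rfl | ht
  · simp only [ht.not_ge, false_and, iff_false]
    intro hp
    linarith [neg_le_minPair_sum_of_mem_cayleySlice hc hne hp,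
      minPair_nonpos (isCompact_sum hc) (interior_subset h0) p.1]
  · rw [zero_smul_set ⟨0, zero_mem_cayleySlice zero_le_one⟩]
    exact ⟨fun hp => ⟨le_rfl, eq_zero_of_mem_cayleySlice_zero hc hne h0 hp⟩,
      fun ⟨_, hp⟩ => (Set.mem_zero.1 hp) ▸ zero_mem_cayleySlice le_rfl⟩
  · rw [Set.mem_smul_set_iff_inv_smul_mem₀ ht.ne']
    refine ⟨fun hp => ⟨ht.le, ?_⟩, fun hp => ?_⟩
    · simpa [inv_mul_cancel₀ ht.ne'] using smul_mem_cayleySlice (inv_nonneg.2 ht.le) hp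
    · simpa [ht.ne'] using smul_mem_cayleySlice ht.le hp.2

lemma cayleySlice_one_subset_convexHull :
    cayleySlice Δ 1 ⊆ convexHull ℝ (cayleyVertex Δ '' polarDual (∑ i, Δ i) ∪
      ⋃ i : Fin k, {(((0 : Fin d → ℝ), Pi.single i 1) : Vdk d k)}) := by
  rintro ⟨v, β⟩ hp
  set γ : Fin k → ℝ := fun i => β i + minPair (Δ i.succ) v
  have hvert : cayleyVertex Δ v ∈ cayleySlice Δ (1 - ∑ i, γ i) := by
    refine ⟨fun i => by simp [cayleyVertex], ?_⟩
    simp only [cayleyVertex, γ, Finset.sum_neg_distrib, Finset.sum_add_distrib]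
    linarith [hp.2]
  obtain ⟨hs, q, hq, hqv⟩ := (mem_cayleySlice_iff hc hne h0).1 hvert
  have hdecomp : ((v, β) : Vdk d k) = (1 - ∑ i, γ i) • cayleyVertex Δ q.1 +
      ∑ i, γ i • (((0 : Fin d → ℝ), Pi.single i 1) : Vdk d k) := by
    have hv : (1 - ∑ i, γ i) • q.1 = v := congrArg Prod.fst hqv
    rw [sum_smul_mk_zero_single, ← cayleyVertex_smul hs, hv]
    ext i <;> simp [cayleyVertex, γ]
  rw [hdecomp]
  refine smul_add_sum_smul_mem_convexHull ?_ (fun i => ?_) hs hp.1 (by ring)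
  · exact Or.inl ⟨q.1, fst_mem_polarDual_of_mem_cayleySlice_one hc hne hq, rfl⟩
  · exact Or.inr (mem_iUnion.2 ⟨i, rfl⟩)

lemma convexHull_eq_cayleySlice_one :
    convexHull ℝ (cayleyVertex Δ '' polarDual (∑ i, Δ i) ∪
      ⋃ i : Fin k, {(((0 : Fin d → ℝ), Pi.single i 1) : Vdk d k)}) = cayleySlice Δ 1 := by
  refine (convexHull_min ?_ (convex_cayleySlice hc hne 1)).antisymm
    (cayleySlice_one_subset_convexHull hc hne h0)
  rintro _ (⟨u, hu, rfl⟩ | hp)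
  · exact cayleyVertex_mem_cayleySlice_one hc hne hu
  · obtain ⟨i, rfl⟩ := mem_iUnion.1 hp
    exact mk_zero_single_mem_cayleySlice_one i

end Cayley

/-- under `cayleyIso`, the image of the dual of the Cayley cone equals
`{(t·Conv({u − Σᵢ₌₁ᵏ min⟨Δᵢ,u⟩eᵢ* : u ∈ Δ*} ∪ {e₁*, …, e_k*}), t) : t ≥ 0}`. -/
theorem image_dual_cayleyCone {d k : ℕ}
    (Δ : Fin (k+1) → Set (Fin d → ℝ))
    (hlat : ∀ i, IsLatticePolytope (Δ i))
    (hrefl : IsReflexive (∑ i, Δ i))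
    (Q : Set (Vdk d k))
    (hQ : Q = convexHull ℝ
        ((fun u => ((u, fun i : Fin k => -(minPair (Δ i.succ) u)) : Vdk d k)) ''
            polarDual (∑ i, Δ i) ∪
          ⋃ i : Fin k, {(((0 : Fin d → ℝ), Pi.single i 1) : Vdk d k)})) :
    cayleyIso '' dualConeV (cayleyCone Δ) =
      {q : (Fin d → ℝ) × (Fin k → ℝ) × ℝ | 0 ≤ q.2.2 ∧ (q.1, q.2.1) ∈ q.2.2 • Q} := by
  have hc : ∀ i, IsCompact (Δ i) := fun i => (hlat i).isCompact
  have h0 := hrefl.2.1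
  have hne : ∀ i, (Δ i).Nonempty := nonempty_sum_iff.1 ⟨0, interior_subset h0⟩
  have hQ' : Q = cayleySlice Δ 1 := hQ.trans (convexHull_eq_cayleySlice_one hc hne h0)
  rw [image_cayleyIso_dualConeV_cayleyCone hc hne, hQ']
  ext q
  exact mem_cayleySlice_iff hc hne h0
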